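/- arXiv:1603.05809 — 2 statements merged into one kernel-verified Lean document; each statement's English description precedes it below -/
import Mathlib

section
/- The derivative at z = 1 of the function z ↦ Γ(z)^{−1} ∏_p (1 + z/(p−1))(1 − 1/p)^z equals c₁ = γ + Σ_p (log(1 − 1/p) + 1/p), the Mertens constant. -/
open Complex Metric

/-!
Near `z = 1` the Euler factor `(1 + z/(n-1)) (1 - 1/n)^z` is `exp L_n(z)` with
`L_n(z) = log (1 + z/(n-1)) + z log (1 - 1/n)`. Since `(1 + 1/(n-1)) (1 - 1/n) = 1`, `L_n(1) = 0`,
and `L_n'(z) = (n-1+z)⁻¹ + log (1 - 1/n) = (1-z)/((n-1+z) n) + (log (1 - 1/n) + 1/n)` is `O(1/n²)`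
uniformly on the disc `‖z - 1‖ < 1`. Hence the product over primes is `exp (∑_p L_p)`, which may be
differentiated termwise: at `z = 1` it has value `1` and derivative `∑_p (log (1 - 1/p) + 1/p)`.
The product rule together with `(1/Γ)'(1) = -Γ'(1) = γ` gives the claim.
-/

namespace MertensProduct

lemma re_pos_of_mem_ball_one {z : ℂ} (hz : z ∈ ball (1 : ℂ) 1) : 0 < z.re := by
  rw [mem_ball, dist_eq] at hz
  have h := (abs_re_le_norm (z - 1)).trans_lt hz
  rw [sub_re, one_re, abs_lt] at h
  linarith [h.1]

lemma natCast_sub_one_ne_zero {n : ℕ} (hn : 2 ≤ n) : (n - 1 : ℂ) ≠ 0 := by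
  rw [sub_ne_zero]; exact_mod_cast (by omega : n ≠ 1)

lemma one_sub_one_div_natCast_eq_ofReal (n : ℕ) : (1 - 1 / n : ℂ) = ((1 - 1 / n : ℝ) : ℂ) := by
  push_cast; rfl

lemma one_sub_one_div_natCast_pos {n : ℕ} (hn : 2 ≤ n) : (0 : ℝ) < 1 - 1 / n := by
  have : (2 : ℝ) ≤ n := by exact_mod_cast hn
  rw [sub_pos, div_lt_one (by linarith)]
  linarith

lemma log_one_sub_one_div_natCast {n : ℕ} (hn : 2 ≤ n) :
    log (1 - 1 / n) = ((Real.log (1 - 1 / n) : ℝ) : ℂ) := by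
  rw [one_sub_one_div_natCast_eq_ofReal, ofReal_log (one_sub_one_div_natCast_pos hn).le]

noncomputable def logFactor (n : ℕ) (z : ℂ) : ℂ :=
  log (1 + z / (n - 1)) + z * log (1 - 1 / n)

lemma exp_logFactor {n : ℕ} (hn : 2 ≤ n) {z : ℂ} (hz : 1 + z / (n - 1) ≠ 0) :
    exp (logFactor n z) = (1 + z / (n - 1)) * (1 - 1 / n) ^ z := by
  have h : (1 - 1 / n : ℂ) ≠ 0 := by
    rw [one_sub_one_div_natCast_eq_ofReal]; exact_mod_cast (one_sub_one_div_natCast_pos hn).ne'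
  rw [logFactor, exp_add, exp_log hz, cpow_def_of_ne_zero h, mul_comm z]

lemma logFactor_one {n : ℕ} (hn : 2 ≤ n) : logFactor n 1 = 0 := by
  have h : 1 + 1 / (n - 1 : ℂ) = (1 - 1 / n : ℂ)⁻¹ := by
    have := natCast_sub_one_ne_zero hn
    have : (n : ℂ) ≠ 0 := by exact_mod_cast (by omega : n ≠ 0)
    field_simp
    ring
  rw [logFactor, one_mul, h, log_one_sub_one_div_natCast hn, one_sub_one_div_natCast_eq_ofReal, ← ofReal_inv,
    ← ofReal_log (inv_nonneg.2 (one_sub_one_div_natCast_pos hn).le), Real.log_inv, ofReal_neg,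
    neg_add_cancel]

lemma re_one_add_div_pos {n : ℕ} (hn : 2 ≤ n) {z : ℂ} (hz : 0 < z.re) :
    0 < (1 + z / (n - 1)).re := by
  have h : (1 : ℝ) ≤ n - 1 := by
    have : (2 : ℝ) ≤ n := by exact_mod_cast hn
    linarith
  have : (n - 1 : ℂ) = ((n - 1 : ℝ) : ℂ) := by push_cast; rfl
  rw [this, add_re, one_re, div_ofReal_re]
  positivity

lemma hasDerivAt_logFactor {n : ℕ} (hn : 2 ≤ n) {z : ℂ} (hz : 0 < z.re) :
    HasDerivAt (logFactor n) ((n - 1 + z)⁻¹ + log (1 - 1 / n)) z := by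
  have hw := re_one_add_div_pos hn hz
  have hw0 : 1 + z / (n - 1) ≠ 0 := fun h => by simp [h] at hw
  have h1 : HasDerivAt (fun z => 1 + z / (n - 1 : ℂ)) (1 / (n - 1)) z := by
    simpa using ((hasDerivAt_id z).div_const (n - 1 : ℂ)).const_add 1
  refine ((h1.clog (Or.inl hw)).add ((hasDerivAt_id' z).mul_const _)).congr_deriv ?_
  have := natCast_sub_one_ne_zero hn
  rw [one_mul]
  congr 1
  field_simp

lemma norm_log_one_add_sub_self_le_sq {w : ℂ} (hw : ‖w‖ ≤ 1 / 2) :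
    ‖log (1 + w) - w‖ ≤ ‖w‖ ^ 2 := by
  refine (norm_log_one_add_sub_self_le (hw.trans_lt (by norm_num))).trans ?_
  have : (1 - ‖w‖)⁻¹ ≤ 2 := by
    rw [inv_le_comm₀ (by linarith) two_pos]; linarith
  nlinarith [sq_nonneg ‖w‖]

lemma norm_deriv_logFactor_le {n : ℕ} (hn : 2 ≤ n) {z : ℂ} (hz : ‖z - 1‖ ≤ 1) :
    ‖(n - 1 + z)⁻¹ + log (1 - 1 / n)‖ ≤ 3 / n ^ 2 := by
  have hn' : (2 : ℝ) ≤ n := by exact_mod_cast hn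
  have hD : (n : ℝ) / 2 ≤ ‖(n - 1 + z : ℂ)‖ := by
    have h := norm_sub_norm_le (n : ℂ) (1 - z)
    rw [norm_natCast, norm_sub_rev] at h
    rw [sub_add]
    linarith
  have hD0 : (n - 1 + z : ℂ) ≠ 0 := norm_pos_iff.1 (by linarith)
  have hn0 : (n : ℂ) ≠ 0 := by exact_mod_cast (by omega : n ≠ 0)
  have hsplit : (n - 1 + z)⁻¹ + log (1 - 1 / n) =
      (1 - z) / ((n - 1 + z) * n) + (log (1 + -(1 / n)) - -(1 / n)) := by
    rw [← sub_eq_add_neg]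
    field_simp
    ring
  have hinv : ‖-(1 / (n : ℂ))‖ = 1 / n := by simp
  have hfirst : ‖(1 - z) / ((n - 1 + z) * n)‖ ≤ 2 / n ^ 2 := by
    rw [norm_div, norm_mul, norm_natCast, norm_sub_rev, div_le_div_iff₀ (by positivity) (by positivity)]
    nlinarith
  have hsecond : ‖log (1 + -(1 / n)) - -(1 / n : ℂ)‖ ≤ 1 / n ^ 2 := by
    refine (norm_log_one_add_sub_self_le_sq ?_).trans ?_
    · rw [hinv, div_le_div_iff₀ (by positivity) two_pos]; linarith
    · rw [hinv, div_pow, one_pow]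
  calc _ ≤ ‖(1 - z) / ((n - 1 + z) * n)‖ + ‖log (1 + -(1 / n)) - -(1 / n : ℂ)‖ := by
        rw [hsplit]; exact norm_add_le _ _
    _ ≤ 2 / n ^ 2 + 1 / n ^ 2 := add_le_add hfirst hsecond
    _ = 3 / n ^ 2 := by ring

lemma summable_three_div_sq_primes : Summable fun p : Nat.Primes => 3 / ((p : ℕ) : ℝ) ^ 2 := by
  have h := ((Real.summable_one_div_nat_pow (p := 2)).2 one_lt_two).mul_left 3
  simp only [mul_one_div] at h
  exact h.comp_injective Subtype.val_injective

lemma hasDerivAt_logFactor_of_mem_ball (p : Nat.Primes) {z : ℂ} (hz : z ∈ ball (1 : ℂ) 1) :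
    HasDerivAt (logFactor p) ((p - 1 + z)⁻¹ + log (1 - 1 / p)) z :=
  hasDerivAt_logFactor p.2.two_le (re_pos_of_mem_ball_one hz)

lemma norm_deriv_logFactor_le_of_mem_ball (p : Nat.Primes) {z : ℂ} (hz : z ∈ ball (1 : ℂ) 1) :
    ‖((p : ℕ) - 1 + z : ℂ)⁻¹ + log (1 - 1 / (p : ℕ))‖ ≤ 3 / ((p : ℕ) : ℝ) ^ 2 :=
  norm_deriv_logFactor_le p.2.two_le (mem_ball_iff_norm.1 hz).le

lemma summable_logFactor_one : Summable fun p : Nat.Primes => logFactor p 1 := by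
  simp only [fun p : Nat.Primes => logFactor_one p.2.two_le, summable_zero]

lemma summable_logFactor {z : ℂ} (hz : z ∈ ball (1 : ℂ) 1) :
    Summable fun p : Nat.Primes => logFactor p z :=
  summable_of_summable_hasDerivAt_of_isPreconnected summable_three_div_sq_primes isOpen_ball
    (convex_ball _ _).isPreconnected (fun p _ => hasDerivAt_logFactor_of_mem_ball p)
    (fun p _ => norm_deriv_logFactor_le_of_mem_ball p) (mem_ball_self one_pos)
    summable_logFactor_one hz

lemma hasDerivAt_tsum_logFactor :
    HasDerivAt (fun z => ∑' p : Nat.Primes, logFactor p z)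
      (∑' p : Nat.Primes, ((Real.log (1 - 1 / (p : ℕ)) + 1 / (p : ℕ) : ℝ) : ℂ)) 1 := by
  refine (hasDerivAt_tsum_of_isPreconnected summable_three_div_sq_primes isOpen_ball
    (convex_ball _ _).isPreconnected (fun p _ => hasDerivAt_logFactor_of_mem_ball p)
    (fun p _ => norm_deriv_logFactor_le_of_mem_ball p) (mem_ball_self one_pos)
    summable_logFactor_one (mem_ball_self one_pos)).congr_deriv (tsum_congr fun p => ?_)
  rw [sub_add_cancel, log_one_sub_one_div_natCast p.2.two_le]
  push_cast
  ring

lemma tprod_eq_exp_tsum_logFactor {z : ℂ} (hz : z ∈ ball (1 : ℂ) 1) :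
    ∏' p : Nat.Primes, (1 + z / ((p : ℕ) - 1 : ℂ)) * (1 - 1 / ((p : ℕ) : ℂ)) ^ z =
      exp (∑' p : Nat.Primes, logFactor p z) := by
  rw [← (summable_logFactor hz).hasSum.cexp.tprod_eq]
  refine tprod_congr fun p => (exp_logFactor p.2.two_le ?_).symm
  exact fun h => by simpa [h] using re_one_add_div_pos p.2.two_le (re_pos_of_mem_ball_one hz)

lemma hasDerivAt_inv_Gamma_one :
    HasDerivAt (fun z => (Gamma z)⁻¹) (Real.eulerMascheroniConstant : ℂ) 1 := by
  have h := hasDerivAt_Gamma_one.inv (by simp [Gamma_one])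
  rwa [Gamma_one, one_pow, div_one, neg_neg] at h

end MertensProduct

open MertensProduct in
/-- The derivative at `z = 1` of `z ↦ Γ(z)⁻¹ ∏_p (1 + z/(p-1))(1 - 1/p)^z` is
the Mertens constant `c₁ = γ + ∑_p (log(1 - 1/p) + 1/p)`. -/
theorem hasDerivAt_A_one :
    HasDerivAt
      (fun z : ℂ => (Complex.Gamma z)⁻¹ *
        ∏' p : Nat.Primes, ((1 + z / ((p : ℕ) - 1 : ℂ)) * ((1 - 1 / ((p : ℕ) : ℂ)) ^ z)))
      ((Real.eulerMascheroniConstant +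
          ∑' p : Nat.Primes, (Real.log (1 - 1 / (p : ℝ)) + 1 / (p : ℝ)) : ℝ) : ℂ)
      1 := by
  have hsum_one : ∑' p : Nat.Primes, logFactor p 1 = 0 := by
    simp only [fun p : Nat.Primes => logFactor_one p.2.two_le, tsum_zero]
  have hprod : HasDerivAt (fun z => exp (∑' p : Nat.Primes, logFactor p z))
      (∑' p : Nat.Primes, ((Real.log (1 - 1 / (p : ℕ)) + 1 / (p : ℕ) : ℝ) : ℂ)) 1 := by
    simpa [hsum_one] using hasDerivAt_tsum_logFactor.cexp
  have heq : (fun z : ℂ => (Gamma z)⁻¹ *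
        ∏' p : Nat.Primes, ((1 + z / ((p : ℕ) - 1 : ℂ)) * ((1 - 1 / ((p : ℕ) : ℂ)) ^ z))) =ᶠ[nhds 1]
      fun z => (Gamma z)⁻¹ * exp (∑' p : Nat.Primes, logFactor p z) := by
    filter_upwards [isOpen_ball.mem_nhds (mem_ball_self one_pos)] with z hz
    rw [tprod_eq_exp_tsum_logFactor hz]
  refine ((hasDerivAt_inv_Gamma_one.mul hprod).congr_of_eventuallyEq heq).congr_deriv ?_
  rw [hsum_one, exp_zero, Gamma_one, inv_one, one_mul, mul_one, ← ofReal_tsum]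
  push_cast
  rfl
end

section
/- Let X ≥ 20, T = log log X, and define Δ_X(τ) := (−iτ/(2π√T)) Σ_{ν ∈ ℤ, ν≠0} (e^{2iπν T}/(iν)) e^{−(τ + 2πν√T)²/2}. Then for every integer k with 1 ≤ k ≤ √T/(2π) and every u with |u| ≤ π√T, the term of Δ_X(2kπ√T + u) corresponding to ν = −k equals e^{−2ikπT}·e^{−u²/2}·(1 + u/(2kπ√T)), and the sum of all the other terms is O(e^{−T}) uniformly in such k and u. -/
/-!
At `τ = 2kπ√T + u` the Gaussian factor of the `ν`-th term is centred at `ν = -k`: with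
`m = ν + k ≠ 0` and `|u| ≤ π√T`, its exponent satisfies `(2π√T m + u)²/2 ≥ π²T/2 + |m| - 1`,
while the prefactor `|τ|/(2π√T|ν|)` is at most `√T`. The other terms are therefore bounded by
`√T e^{-π²T/2} e^{1-|m|}`, whose sum is `O(√T e^{-π²T/2}) = O(e^{-T})`.
-/

open Complex

/-- The `ν`-th term of the series defining `Δ_X(τ)`
(with `T = log log X`): `(-iτ/(2π√T)) (e^{2iπνT}/(iν)) e^{-(τ+2πν√T)²/2}`. -/
noncomputable def deltaTerm (T τ : ℝ) (ν : ℤ) : ℂ :=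
  (-I * τ / (2 * Real.pi * Real.sqrt T)) *
    (Complex.exp (2 * Real.pi * I * ν * T) / (I * ν)) *
    Real.exp (-(τ + 2 * Real.pi * ν * Real.sqrt T) ^ 2 / 2)

open Real

lemma norm_deltaTerm (T τ : ℝ) (ν : ℤ) :
    ‖deltaTerm T τ ν‖ =
      |τ| / (2 * π * √T) / |(ν : ℝ)| * rexp (-(τ + 2 * π * ν * √T) ^ 2 / 2) := by
  have hexp : ‖Complex.exp (2 * π * I * ν * T)‖ = 1 := by
    rw [Complex.norm_exp]; simp
  rw [deltaTerm, norm_mul, norm_mul, norm_div, norm_div, hexp, Complex.norm_real,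
    Real.norm_of_nonneg (exp_pos _).le]
  simp [abs_of_nonneg (Real.sqrt_nonneg T), abs_of_pos pi_pos, div_eq_mul_inv]

lemma deltaTerm_neg_natCast {T : ℝ} (hT : 0 < T) {k : ℕ} (hk : k ≠ 0) (u : ℝ) :
    deltaTerm T (2 * k * π * √T + u) (-(k : ℤ)) =
      Complex.exp (-(2 * π * I * k * T)) * rexp (-u ^ 2 / 2) *
        ((1 + u / (2 * k * π * √T) : ℝ) : ℂ) := by
  have hS : (√T : ℂ) ≠ 0 := by exact_mod_cast (Real.sqrt_pos.2 hT).ne'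
  have hk' : (k : ℂ) ≠ 0 := by exact_mod_cast hk
  have hπ : (π : ℂ) ≠ 0 := by exact_mod_cast pi_ne_zero
  have hgauss : -(2 * k * π * √T + u + 2 * π * ((-(k : ℤ) : ℤ) : ℝ) * √T) ^ 2 / 2 =
      -u ^ 2 / 2 := by
    push_cast; ring
  rw [deltaTerm, hgauss]
  push_cast
  field_simp

lemma summable_exp_neg_abs_int : Summable fun m : ℤ => rexp (-|(m : ℝ)|) := by
  refine Summable.of_nat_of_neg ?_ ?_ <;> simpa using Real.summable_exp_neg_nat

lemma norm_tsum_le_of_norm_le_mul_exp_neg_abs {E : Type*} [SeminormedAddCommGroup E]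
    {p : ℤ → Prop} {f : ℤ → E} {c : ℝ} (k : ℤ) (hc : 0 ≤ c)
    (hf : ∀ ν, p ν → ‖f ν‖ ≤ c * rexp (-|(ν + k : ℝ)|)) :
    ‖∑' ν : {ν // p ν}, f ν‖ ≤ c * ∑' m : ℤ, rexp (-|(m : ℝ)|) := by
  set g : ℤ → ℝ := fun ν => c * rexp (-|(ν + k : ℝ)|)
  have hshift : (fun ν : ℤ => rexp (-|(ν + k : ℝ)|)) =
      (fun m : ℤ => rexp (-|(m : ℝ)|)) ∘ Equiv.addRight k := by
    funext ν; simp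
  have hg : Summable g := by
    refine Summable.mul_left c ?_
    rw [hshift]
    exact (Equiv.addRight k).summable_iff.2 summable_exp_neg_abs_int
  calc ‖∑' ν : {ν // p ν}, f ν‖ ≤ ∑' ν : {ν // p ν}, g ν :=
        tsum_of_norm_bounded (hg.subtype _).hasSum fun ν => hf ν ν.2
    _ ≤ ∑' ν, g ν := hg.tsum_subtype_le g _ fun _ => by positivity
    _ = c * ∑' m : ℤ, rexp (-|(m : ℝ)|) := by
        rw [tsum_mul_left, hshift]
        exact congrArg (c * ·) ((Equiv.addRight k).tsum_eq fun m : ℤ => rexp (-|(m : ℝ)|))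

lemma exp_neg_half_sq_two_mul_add_le {A m v : ℝ} (hA : 1 ≤ A) (hm : 1 ≤ |m|) (hv : |v| ≤ A) :
    rexp (-(2 * A * m + v) ^ 2 / 2) ≤ rexp (-A ^ 2 / 2) * rexp 1 * rexp (-|m|) := by
  have hlow : A * (2 * |m| - 1) ≤ |2 * A * m + v| := by
    have := abs_sub_abs_le_abs_sub (2 * A * m) (-v)
    rw [abs_neg, sub_neg_eq_add, abs_mul, abs_mul, abs_of_pos (by positivity : (0:ℝ) < 2),
      abs_of_pos (by linarith : 0 < A)] at this
    linarith
  have hsq : (A * (2 * |m| - 1)) ^ 2 ≤ (2 * A * m + v) ^ 2 := by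
    rw [← sq_abs (2 * A * m + v)]
    exact pow_le_pow_left₀ (by nlinarith) hlow 2
  rw [← Real.exp_add, ← Real.exp_add, Real.exp_le_exp]
  -- `A²(2|m|-1)² - A² - 2(|m|-1) = (|m|-1)(4A²|m| - 2)`
  nlinarith [mul_nonneg (sub_nonneg.2 hm) (by nlinarith : 0 ≤ 4 * A ^ 2 * |m| - 2)]

lemma norm_deltaTerm_le {T u : ℝ} {k : ℕ} {ν : ℤ} (hk1 : 1 ≤ k)
    (hk : (k : ℝ) ≤ √T / (2 * π)) (hu : |u| ≤ π * √T) (hν0 : ν ≠ 0) (hνk : ν ≠ -k) :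
    ‖deltaTerm T (2 * k * π * √T + u) ν‖ ≤
      √T * rexp (-(π ^ 2 * T) / 2) * rexp 1 * rexp (-|(ν + k : ℝ)|) := by
  have hk1' : (1 : ℝ) ≤ k := by exact_mod_cast hk1
  have hkS : 2 * π * k ≤ √T := by rwa [le_div_iff₀ (by positivity), mul_comm] at hk
  have hS : 2 * π ≤ √T := by nlinarith [pi_pos]
  have hT : 0 ≤ T := Real.sqrt_pos.1 (by linarith [pi_pos]) |>.le
  have hprefactor : |2 * k * π * √T + u| / (2 * π * √T) / |(ν : ℝ)| ≤ √T := by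
    have hν : 1 ≤ |(ν : ℝ)| := by exact_mod_cast Int.one_le_abs hν0
    calc _ ≤ |2 * k * π * √T + u| / (2 * π * √T) := div_le_self (by positivity) hν
      _ ≤ √T := by
        rw [div_le_iff₀ (by nlinarith [pi_pos])]
        calc |2 * k * π * √T + u| ≤ 2 * k * π * √T + π * √T := by
              grw [abs_add_le, abs_of_nonneg (by positivity), hu]
          _ ≤ √T * (2 * π * √T) := by
              nlinarith [mul_le_mul_of_nonneg_right hkS (sqrt_nonneg T),
                mul_le_mul_of_nonneg_right hS (sqrt_nonneg T),
                mul_le_mul_of_nonneg_right pi_gt_three.le (sq_nonneg √T)]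
  have hm : 1 ≤ |(ν + k : ℝ)| := by
    exact_mod_cast Int.one_le_abs (show ν + k ≠ 0 by omega)
  have hgauss := exp_neg_half_sq_two_mul_add_le (A := π * √T) (m := ν + k)
    (by nlinarith [pi_gt_three]) hm hu
  rw [mul_pow, sq_sqrt hT] at hgauss
  have harg : 2 * k * π * √T + u + 2 * π * ν * √T = 2 * (π * √T) * (ν + k) + u := by ring
  rw [norm_deltaTerm, harg]
  exact (mul_le_mul hprefactor hgauss (by positivity) (by positivity)).trans_eq (by ring)

lemma sqrt_mul_exp_neg_pi_sq_mul_le {T : ℝ} (hT : 0 ≤ T) :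
    √T * rexp (-(π ^ 2 * T) / 2) ≤ rexp (-T) := by
  have hsqrt : √T ≤ rexp (T / 2) := by
    nlinarith [add_one_le_exp (T / 2), sq_sqrt hT, sq_nonneg (√T - 1)]
  have hπ : 9 ≤ π ^ 2 := by nlinarith [pi_gt_three]
  calc √T * rexp (-(π ^ 2 * T) / 2) ≤ rexp (T / 2) * rexp (-(π ^ 2 * T) / 2) := by gcongr
    _ = rexp (T / 2 + -(π ^ 2 * T) / 2) := (Real.exp_add _ _).symm
    _ ≤ rexp (-T) := exp_le_exp.2 (by nlinarith)

/-- Localization of `Δ_X` near the multiples of `2π√T`: at `τ = 2kπ√T + u` with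
`|u| ≤ π√T`, the term `ν = -k` equals `e^{-2ikπT} e^{-u²/2}(1 + u/(2kπ√T))` and the
remaining terms contribute `O(e^{-T})`. -/
theorem deltaX_localization :
    ∃ C : ℝ, ∀ X : ℝ, X ≥ 20 →
      ∀ k : ℕ, 1 ≤ k →
        (k : ℝ) ≤ Real.sqrt (Real.log (Real.log X)) / (2 * Real.pi) →
      ∀ u : ℝ, |u| ≤ Real.pi * Real.sqrt (Real.log (Real.log X)) →
        (deltaTerm (Real.log (Real.log X))
            (2 * k * Real.pi * Real.sqrt (Real.log (Real.log X)) + u) (-(k : ℤ)) =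
          Complex.exp (-(2 * Real.pi * I * k * Real.log (Real.log X))) *
            Real.exp (-u ^ 2 / 2) *
            ((1 + u / (2 * k * Real.pi * Real.sqrt (Real.log (Real.log X))) : ℝ) : ℂ)) ∧
        ‖∑' ν : {ν : ℤ // ν ≠ 0 ∧ ν ≠ -(k : ℤ)},
            deltaTerm (Real.log (Real.log X))
              (2 * k * Real.pi * Real.sqrt (Real.log (Real.log X)) + u) ν‖ ≤
          C * Real.exp (-Real.log (Real.log X)) := by
  refine ⟨rexp 1 * ∑' m : ℤ, rexp (-|(m : ℝ)|), fun X _ k hk1 hk u hu => ?_⟩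
  set T := Real.log (Real.log X)
  have hT : 0 < T := by
    have : 0 < √T / (2 * π) := lt_of_lt_of_le (by exact_mod_cast hk1) hk
    exact Real.sqrt_pos.1 ((div_pos_iff_of_pos_right (by positivity)).1 this)
  refine ⟨deltaTerm_neg_natCast hT (by omega) u, ?_⟩
  have hsum_nonneg : 0 ≤ ∑' m : ℤ, rexp (-|(m : ℝ)|) := tsum_nonneg fun _ => (exp_pos _).le
  calc _ ≤ √T * rexp (-(π ^ 2 * T) / 2) * rexp 1 * ∑' m : ℤ, rexp (-|(m : ℝ)|) :=
        norm_tsum_le_of_norm_le_mul_exp_neg_abs k (by positivity) fun ν hν => by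
          exact_mod_cast norm_deltaTerm_le hk1 hk hu hν.1 hν.2
    _ ≤ rexp (-T) * rexp 1 * ∑' m : ℤ, rexp (-|(m : ℝ)|) := by
        gcongr; exact sqrt_mul_exp_neg_pi_sq_mul_le hT.le
    _ = _ := by ring
end
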